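/- If f, f' : X → Yⁿ are surjective fibrations that are homotopic to each other, then TC_n(f) = TC_n(f'). -/

import Mathlib

/-- The (higher) homotopic distance of a family of continuous maps `f i : X → Y`:
the least `l` such that `X` admits an open cover by `l` open sets on each of which
all the maps restrict to pairwise homotopic maps (`∞` if no such cover exists). -/
noncomputable def homDist {X Y : Type*} [TopologicalSpace X] [TopologicalSpace Y]
    {k : ℕ} (f : Fin k → C(X, Y)) : ℕ∞ :=
  sInf ((fun n : ℕ => (n : ℕ∞)) '' {n : ℕ | ∃ U : Fin n → Set X,
    (∀ j, IsOpen (U j)) ∧ (⋃ j, U j) = Set.univ ∧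
    ∀ j i i', ((f i).restrict (U j)).Homotopic ((f i').restrict (U j))})

/-- Homotopic distance of two maps. -/
noncomputable def homDist2 {X Y : Type*} [TopologicalSpace X] [TopologicalSpace Y]
    (f g : C(X, Y)) : ℕ∞ :=
  homDist ![f, g]

universe u

/-- A continuous map is a fibration if it has the homotopy lifting property with respect
to all spaces (in universe `u`). -/
def IsFibration {X Y : Type*} [TopologicalSpace X] [TopologicalSpace Y]
    (f : C(X, Y)) : Prop :=
  ∀ (Z : Type u) [TopologicalSpace Z] (g : C(Z, X)) (G : C(Z × unitInterval, Y)),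
    (∀ z, G (z, 0) = f (g z)) →
    ∃ G' : C(Z × unitInterval, X),
      (∀ p, f (G' p) = G p) ∧ ∀ z, G' (z, 0) = g z

/-- The Schwarz genus of a map `p : E → B`: the least number of open sets covering `B`
over each of which `p` admits a continuous local section. -/
noncomputable def secat {E B : Type*} [TopologicalSpace E] [TopologicalSpace B]
    (p : C(E, B)) : ℕ∞ :=
  sInf ((fun n : ℕ => (n : ℕ∞)) '' {n : ℕ | ∃ U : Fin n → Set B,
    (∀ j, IsOpen (U j)) ∧ (⋃ j, U j) = Set.univ ∧
    ∀ j, ∃ s : C(U j, E), ∀ x : U j, p (s x) = (x : B)})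

/-- The fibration `π_g : X^I → X × Y`, `β ↦ (β 0, g (β 1))`, associated to `g : X → Y`. -/
noncomputable def piMap {X Y : Type*} [TopologicalSpace X] [TopologicalSpace Y]
    (g : C(X, Y)) : C(C(unitInterval, X), X × Y) :=
  ⟨fun β => (β 0, g (β 1)),
    (continuous_eval_const 0).prodMk
      (g.continuous.comp (continuous_eval_const 1))⟩

/-- The topological complexity of a map `g : X → Y`, as the Schwarz genus of `π_g`. -/
noncomputable def TCmap {X Y : Type*} [TopologicalSpace X] [TopologicalSpace Y]
    (g : C(X, Y)) : ℕ∞ :=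
  secat (piMap g)

/-- Projection `pᵢ : Xⁿ → X` as a continuous map. -/
def projC {X : Type*} [TopologicalSpace X] {n : ℕ} (i : Fin n) : C((Fin n → X), X) :=
  ⟨fun x => x i, continuous_apply i⟩

theorem ContinuousMap.Homotopic.restrict {X Y : Type*} [TopologicalSpace X] [TopologicalSpace Y]
    {f g : C(X, Y)} (h : f.Homotopic g) (s : Set X) : (f.restrict s).Homotopic (g.restrict s) :=
  h.comp (.refl ⟨Subtype.val, continuous_subtype_val⟩)

theorem homDist_congr {X Y : Type*} [TopologicalSpace X] [TopologicalSpace Y] {k : ℕ}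
    {f g : Fin k → C(X, Y)} (h : ∀ i, (f i).Homotopic (g i)) : homDist f = homDist g := by
  have hrestrict (s : Set X) (i i' : Fin k) :
      ((f i).restrict s).Homotopic ((f i').restrict s) ↔
        ((g i).restrict s).Homotopic ((g i').restrict s) :=
    ⟨fun hf => (((h i).restrict s).symm.trans hf).trans ((h i').restrict s),
      fun hg => (((h i).restrict s).trans hg).trans ((h i').restrict s).symm⟩
  simp only [homDist, hrestrict]

theorem TCn_eq_of_homotopic_general {X Y : Type*} [TopologicalSpace X] [TopologicalSpace Y]
    {n : ℕ} (f f' : C(X, Fin n → Y))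
    (h : f.Homotopic f') :
    homDist (fun i : Fin n => f.comp (projC i)) =
      homDist (fun i : Fin n => f'.comp (projC i)) :=
  homDist_congr fun _ => h.comp (.refl _)

theorem TCn_eq_of_homotopic {X Y : Type*} [TopologicalSpace X] [TopologicalSpace Y]
    {n : ℕ} (f f' : C(X, Fin n → Y)) (hsurj : Function.Surjective f)
    (hsurj' : Function.Surjective f') (hf : IsFibration.{u} f) (hf' : IsFibration.{u} f')
    (h : f.Homotopic f') :
    homDist (fun i : Fin n => f.comp (projC i)) =
      homDist (fun i : Fin n => f'.comp (projC i)) :=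
  TCn_eq_of_homotopic_general f f' h
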